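/- arXiv:1008.1716 — 4 statements merged into one kernel-verified Lean document; each statement's English description precedes it below -/
import Mathlib

section
/- There exists an absolute constant C > 0 such that the following holds. Let X_1, ..., X_n be i.i.d. random vectors in R^p distributed as N_p(0, Σ), and let X̄ = (1/n) Σ_{k=1}^n X_k be the sample mean. Then for every p × p matrix M, E ‖M ∘ (X̄ X̄^T)‖ ≤ E ‖M‖ ‖X̄‖_∞² ≤ C ‖M‖ ‖Σ‖ log(2p)/n, where ‖x‖_∞ = max_i |x_i| is the ℓ_∞ norm on R^p. -/
open MeasureTheory ProbabilityTheory Matrix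

/-- The ℓ₂ → ℓ₂ operator (spectral) norm of a real matrix. -/
noncomputable def opNorm {p : ℕ} (A : Matrix (Fin p) (Fin p) ℝ) : ℝ :=
  ‖(Matrix.toEuclideanCLM (𝕜 := ℝ) (n := Fin p) A)‖

/-- The ℓ₁ → ℓ₂ operator norm `max_j (∑ i m_{ij}²)^{1/2}`. -/
noncomputable def norm12 {p : ℕ} (M : Matrix (Fin p) (Fin p) ℝ) : ℝ :=
  ⨆ j : Fin p, Real.sqrt (∑ i, (M i j) ^ 2)

/-- Standard Gaussian measure on ℝ^p (product of standard normals). -/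
noncomputable def stdGaussianPi (p : ℕ) : Measure (Fin p → ℝ) :=
  Measure.pi fun _ => gaussianReal 0 1

/-- The centered multivariate normal distribution `N_p(0, S)` on ℝ^p, realized as the
pushforward of the standard Gaussian by the positive-semidefinite square root of `S`. -/
noncomputable def multiGaussian {p : ℕ} {S : Matrix (Fin p) (Fin p) ℝ}
    (hS : S.PosSemidef) : Measure (Fin p → ℝ) :=
  Measure.map (fun x => ((hS.1.eigenvectorUnitary : Matrix (Fin p) (Fin p) ℝ) *
    diagonal (Real.sqrt ∘ hS.1.eigenvalues) *
    (star hS.1.eigenvectorUnitary : Matrix (Fin p) (Fin p) ℝ)).mulVec x) (stdGaussianPi p)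

/-- The sample covariance matrix `(1/n) ∑ₖ Xₖ Xₖᵀ`. -/
noncomputable def sampleCov {p n : ℕ} (X : Fin n → Fin p → ℝ) : Matrix (Fin p) (Fin p) ℝ :=
  (n : ℝ)⁻¹ • ∑ k, vecMulVec (X k) (X k)


/-- The ℓ∞ norm `max_i |x_i|` on ℝ^p. -/
noncomputable def linf {p : ℕ} (x : Fin p → ℝ) : ℝ := ⨆ i : Fin p, |x i|

/-!
Since `M ∘ (x xᵀ) = D M D` with `D = diag x`, its operator norm is at most `‖M‖ ‖x‖∞²`.
Each coordinate of `X̄` is a centred Gaussian of variance `Σᵢᵢ / n ≤ ‖Σ‖ / n`, hence sub-Gaussian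
with that parameter. For a sub-Gaussian `Z` with parameter `c` and `λ c ≤ 1/4`, writing
`exp (λ Z²) = E_g exp (√(2λ) Z g)` with `g ~ N(0, 1)` independent and exchanging the integrals gives
`E exp (λ Z²) ≤ E exp (g² / 4) = √2`. Jensen's inequality for `exp` and bounding the maximum of
the `exp (λ X̄ᵢ²)` by their sum give `exp (λ E ‖X̄‖∞²) ≤ √2 p`; take `λ = n / (4 ‖Σ‖)`.
-/

open Real
open scoped NNReal ENNReal Matrix.Norms.L2Operator

section MatrixNorms

lemma opNorm_eq_l2_opNorm {p : ℕ} (A : Matrix (Fin p) (Fin p) ℝ) : opNorm A = ‖A‖ := rfl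

lemma linf_eq_norm {p : ℕ} (x : Fin p → ℝ) : linf x = ‖x‖ := by
  rcases isEmpty_or_nonempty (Fin p) with h | h
  · simp [linf, Subsingleton.elim x 0]
  · refine le_antisymm (ciSup_le fun i => norm_le_pi_norm x i)
      ((pi_norm_le_iff_of_nonempty x).2 fun i => ?_)
    exact le_ciSup (f := fun i => |x i|) (Set.finite_range _).bddAbove i

variable {n 𝕜 : Type*} [Fintype n] [DecidableEq n] [RCLike 𝕜]

lemma hadamard_vecMulVec_self {α : Type*} [CommSemiring α] (M : Matrix n n α) (x : n → α) :
    M ⊙ vecMulVec x x = diagonal x * M * diagonal x := by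
  ext i j
  simp [vecMulVec_apply, mul_comm, mul_left_comm]

lemma l2_opNorm_hadamard_vecMulVec_self_le (M : Matrix n n 𝕜) (x : n → 𝕜) :
    ‖M ⊙ vecMulVec x x‖ ≤ ‖M‖ * ‖x‖ ^ 2 := by
  rw [hadamard_vecMulVec_self]
  calc ‖diagonal x * M * diagonal x‖ ≤ ‖diagonal x‖ * ‖M‖ * ‖diagonal x‖ := by
        grw [l2_opNorm_mul, l2_opNorm_mul]
    _ = ‖M‖ * ‖x‖ ^ 2 := by rw [l2_opNorm_diagonal]; ring

lemma norm_apply_le_l2_opNorm (A : Matrix n n 𝕜) (i j : n) : ‖A i j‖ ≤ ‖A‖ := by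
  calc ‖A i j‖ ≤ ‖toEuclideanCLM (𝕜 := 𝕜) A (EuclideanSpace.single j 1)‖ := by
        refine le_of_eq_of_le ?_ (PiLp.norm_apply_le _ i)
        simp [EuclideanSpace.single, mulVec_single]
    _ ≤ ‖A‖ := by
        grw [ContinuousLinearMap.le_opNorm]; simp [cstar_norm_def]

end MatrixNorms

section PosSemidefSqrt

variable {n : Type*} [Fintype n] [DecidableEq n] {S : Matrix n n ℝ}

lemma Matrix.PosSemidef.cfc_sqrt_mul_self (hS : S.PosSemidef) :
    cfc Real.sqrt S * cfc Real.sqrt S = S := by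
  rw [← cfc_mul ..]
  conv_rhs => rw [← cfc_id' ℝ S hS.1]
  refine cfc_congr fun x hx => ?_
  rw [hS.1.spectrum_real_eq_range_eigenvalues] at hx
  obtain ⟨i, rfl⟩ := hx
  exact mul_self_sqrt (hS.eigenvalues_nonneg i)

lemma Matrix.PosSemidef.sum_sq_cfc_sqrt_apply (hS : S.PosSemidef) (i : n) :
    ∑ j, cfc Real.sqrt S i j ^ 2 = S i i := by
  have hsymm : IsHermitian (cfc Real.sqrt S) := cfc_predicate Real.sqrt S
  conv_rhs => rw [← hS.cfc_sqrt_mul_self, mul_apply]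
  refine Finset.sum_congr rfl fun j _ => ?_
  rw [sq, ← hsymm.apply j i, star_trivial]

end PosSemidefSqrt

lemma multiGaussian_eq_map_cfc_sqrt {p : ℕ} {S : Matrix (Fin p) (Fin p) ℝ} (hS : S.PosSemidef) :
    multiGaussian hS = (stdGaussianPi p).map (fun x => cfc Real.sqrt S *ᵥ x) := by
  rw [multiGaussian, hS.1.cfc_eq, IsHermitian.cfc, Unitary.conjStarAlgAut_apply]
  rfl

lemma lintegral_exp_sq_div_four_gaussianReal :
    ∫⁻ x, ENNReal.ofReal (exp (x ^ 2 / 4)) ∂gaussianReal 0 1 = ENNReal.ofReal √2 := by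
  have hpdf : ∀ x : ℝ, gaussianPDFReal 0 1 x * exp (x ^ 2 / 4)
      = (√(2 * π))⁻¹ * exp (-4⁻¹ * x ^ 2) := fun x => by
    rw [gaussianPDFReal_def, mul_assoc, ← exp_add]
    norm_num
    exact Or.inl (by ring)
  rw [gaussianReal_of_var_ne_zero 0 one_ne_zero,
    lintegral_withDensity_eq_lintegral_mul₀ (measurable_gaussianPDF 0 1).aemeasurable (by fun_prop)]
  simp_rw [Pi.mul_apply, gaussianPDF, ← ENNReal.ofReal_mul (gaussianPDFReal_nonneg 0 1 _), hpdf]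
  rw [← ofReal_integral_eq_lintegral_ofReal ((integrable_exp_neg_mul_sq (by norm_num)).const_mul _)
    (ae_of_all _ fun x => by positivity), integral_const_mul, integral_gaussian,
    ← sqrt_inv, ← sqrt_mul (by positivity)]
  congr 2
  field_simp
  norm_num

lemma hasSubgaussianMGF_id_gaussianReal (v : ℝ≥0) :
    HasSubgaussianMGF id v (gaussianReal 0 v) where
  integrable_exp_mul t := integrable_exp_mul_gaussianReal t
  mgf_le t := by simp [mgf_id_gaussianReal]

namespace ProbabilityTheory.HasSubgaussianMGF

variable {Ω : Type*} {m : MeasurableSpace Ω} {μ : Measure Ω} {X : Ω → ℝ} {c d : ℝ≥0}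

lemma mono (h : HasSubgaussianMGF X c μ) (hcd : c ≤ d) : HasSubgaussianMGF X d μ where
  integrable_exp_mul := h.integrable_exp_mul
  mgf_le t := (h.mgf_le t).trans <| exp_le_exp.2 <| by gcongr

lemma map {E : Type*} [MeasurableSpace E] {Y : Ω → E} {f : E → ℝ} (hY : AEMeasurable Y μ)
    (hf : Measurable f) (h : HasSubgaussianMGF (f ∘ Y) c μ) :
    HasSubgaussianMGF f c (μ.map Y) := by
  rwa [← id_map_iff hf.aemeasurable, AEMeasurable.map_map_of_aemeasurable hf.aemeasurable hY,
    id_map_iff (hf.comp_aemeasurable hY)]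

lemma mean_of_iIndepFun {ι : Type*} [Fintype ι] {X : ι → Ω → ℝ} (h_indep : iIndepFun X μ)
    (h : ∀ i, HasSubgaussianMGF (X i) c μ) :
    HasSubgaussianMGF (fun ω ↦ (Fintype.card ι : ℝ)⁻¹ * ∑ i, X i ω) (c / Fintype.card ι) μ := by
  convert (sum_of_iIndepFun h_indep fun i _ ↦ h i).const_mul (Fintype.card ι : ℝ)⁻¹ using 1
  ext1
  change (c / Fintype.card ι : ℝ) = (Fintype.card ι : ℝ)⁻¹ ^ 2 * ((∑ _i : ι, c : ℝ≥0) : ℝ)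
  rw [NNReal.coe_sum, Finset.sum_const, Finset.card_univ, nsmul_eq_mul]
  rcases eq_or_ne (Fintype.card ι : ℝ) 0 with hι | hι
  · simp [hι]
  · field_simp

variable [IsProbabilityMeasure μ] {l : ℝ}

lemma lintegral_exp_mul_sq_le (h : HasSubgaussianMGF X c μ) (hl : 0 ≤ l) (hlc : l * c ≤ 1 / 4) :
    ∫⁻ ω, ENNReal.ofReal (exp (l * X ω ^ 2)) ∂μ ≤ ENNReal.ofReal √2 := by
  set a := √(2 * l)
  have ha : a ^ 2 = 2 * l := sq_sqrt (by positivity)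
  have hexp_sq : ∀ x, ENNReal.ofReal (exp (l * x ^ 2))
      = ∫⁻ g, ENNReal.ofReal (exp (a * x * g)) ∂gaussianReal 0 1 := fun x => by
    rw [← ofReal_integral_eq_lintegral_ofReal (integrable_exp_mul_gaussianReal _)
      (ae_of_all _ fun _ => (exp_pos _).le)]
    have := congrFun (mgf_id_gaussianReal (μ := 0) (v := 1)) (a * x)
    simp only [mgf, id] at this
    rw [this]
    congr 2
    rw [mul_pow, ha]; push_cast; ring
  calc ∫⁻ ω, ENNReal.ofReal (exp (l * X ω ^ 2)) ∂μ
      = ∫⁻ g, ∫⁻ ω, ENNReal.ofReal (exp ((a * g) * X ω)) ∂μ ∂gaussianReal 0 1 := by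
        simp_rw [hexp_sq]
        rw [lintegral_lintegral_swap]
        · simp_rw [mul_right_comm a]
        · have hX : AEMeasurable (fun z : Ω × ℝ => X z.1) (μ.prod (gaussianReal 0 1)) :=
            h.aemeasurable.comp_fst
          exact (measurable_exp.comp_aemeasurable
            ((hX.const_mul a).mul measurable_snd.aemeasurable)).ennreal_ofReal
    _ ≤ ∫⁻ g, ENNReal.ofReal (exp (g ^ 2 / 4)) ∂gaussianReal 0 1 := by
        refine lintegral_mono fun g => ?_
        rw [← ofReal_integral_eq_lintegral_ofReal (h.integrable_exp_mul _)
          (ae_of_all _ fun _ => (exp_pos _).le)]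
        refine ENNReal.ofReal_le_ofReal ((h.mgf_le (a * g)).trans (exp_le_exp.2 ?_))
        rw [mul_pow, ha]
        nlinarith [sq_nonneg g]
    _ = ENNReal.ofReal √2 := lintegral_exp_sq_div_four_gaussianReal

lemma integrable_exp_mul_sq (h : HasSubgaussianMGF X c μ) (hl : 0 ≤ l) (hlc : l * c ≤ 1 / 4) :
    Integrable (fun ω => exp (l * X ω ^ 2)) μ :=
  ⟨(measurable_exp.comp_aemeasurable
      ((h.aemeasurable.pow_const 2).const_mul l)).aestronglyMeasurable,
    (hasFiniteIntegral_iff_ofReal (ae_of_all _ fun _ => (exp_pos _).le)).2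
      ((h.lintegral_exp_mul_sq_le hl hlc).trans_lt ENNReal.ofReal_lt_top)⟩

lemma integral_exp_mul_sq_le (h : HasSubgaussianMGF X c μ) (hl : 0 ≤ l) (hlc : l * c ≤ 1 / 4) :
    ∫ ω, exp (l * X ω ^ 2) ∂μ ≤ √2 := by
  rw [integral_eq_lintegral_of_nonneg_ae (ae_of_all _ fun _ => (exp_pos _).le)
    (h.integrable_exp_mul_sq hl hlc).1]
  exact ENNReal.toReal_le_of_le_ofReal (sqrt_nonneg 2) (h.lintegral_exp_mul_sq_le hl hlc)

end ProbabilityTheory.HasSubgaussianMGF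

lemma hasSubgaussianMGF_dotProduct_stdGaussianPi {p : ℕ} (a : Fin p → ℝ) :
    HasSubgaussianMGF (fun y => a ⬝ᵥ y) ⟨∑ j, a j ^ 2, by positivity⟩ (stdGaussianPi p) := by
  have h_indep : iIndepFun (fun j (y : Fin p → ℝ) => a j * y j) (stdGaussianPi p) :=
    iIndepFun_pi (X := fun j x => a j * x) fun j => by fun_prop
  have h_coord : ∀ j, HasSubgaussianMGF (fun y : Fin p → ℝ => y j) 1 (stdGaussianPi p) := by
    intro j
    have h := hasSubgaussianMGF_id_gaussianReal 1
    rw [← (measurePreserving_eval (fun _ : Fin p => gaussianReal 0 1) j).map_eq] at h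
    exact .of_map (Y := fun y : Fin p → ℝ => y j) (measurable_pi_apply j).aemeasurable h
  refine (HasSubgaussianMGF.sum_of_iIndepFun h_indep (s := .univ) fun j _ =>
    (h_coord j).const_mul (a j)).mono (le_of_eq ?_)
  ext1
  rw [NNReal.coe_sum]
  exact Finset.sum_congr rfl fun j _ => mul_one (a j ^ 2)

lemma hasSubgaussianMGF_multiGaussian_apply {p : ℕ} {S : Matrix (Fin p) (Fin p) ℝ}
    (hS : S.PosSemidef) (i : Fin p) :
    HasSubgaussianMGF (fun x => x i) ⟨S i i, hS.diag_nonneg⟩ (multiGaussian hS) := by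
  rw [multiGaussian_eq_map_cfc_sqrt]
  refine .map (by fun_prop) (measurable_pi_apply i) ?_
  exact (hasSubgaussianMGF_dotProduct_stdGaussianPi (cfc Real.sqrt S i)).mono
    (Subtype.mk_le_mk.2 (hS.sum_sq_cfc_sqrt_apply i).le)

section MaximalInequality

variable {Ω ι : Type*} {m : MeasurableSpace Ω} {μ : Measure Ω} [IsProbabilityMeasure μ]
  [Fintype ι] [Nonempty ι] {Y : Ω → ι → ℝ}

lemma exp_mul_norm_sq_le_sum (l : ℝ) (y : ι → ℝ) :
    exp (l * ‖y‖ ^ 2) ≤ ∑ i, exp (l * y i ^ 2) := by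
  obtain ⟨i, -, hi⟩ := Finset.exists_mem_eq_sup Finset.univ Finset.univ_nonempty (‖y ·‖₊)
  rw [Pi.norm_def, hi, coe_nnnorm, norm_eq_abs, sq_abs]
  exact Finset.single_le_sum (f := fun i => exp (l * y i ^ 2)) (fun j _ => (exp_pos _).le)
    (Finset.mem_univ i)

lemma integral_norm_sq_le_of_integral_exp_mul_sq_le (hY : AEMeasurable Y μ) {l B : ℝ}
    (hl : 0 < l) (h_int : ∀ i, Integrable (fun ω => exp (l * Y ω i ^ 2)) μ)
    (hB : ∀ i, ∫ ω, exp (l * Y ω i ^ 2) ∂μ ≤ B) :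
    Integrable (fun ω => ‖Y ω‖ ^ 2) μ ∧
      ∫ ω, ‖Y ω‖ ^ 2 ∂μ ≤ l⁻¹ * log (Fintype.card ι * B) := by
  have h_meas : AEStronglyMeasurable (fun ω => ‖Y ω‖ ^ 2) μ :=
    (hY.norm.pow_const 2).aestronglyMeasurable
  have h_sum : Integrable (fun ω => ∑ i, exp (l * Y ω i ^ 2)) μ :=
    integrable_finsetSum _ fun i _ => h_int i
  have h_exp : Integrable (fun ω => exp (l * ‖Y ω‖ ^ 2)) μ :=
    h_sum.mono'
      (measurable_exp.comp_aemeasurable (h_meas.aemeasurable.const_mul l)).aestronglyMeasurable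
      (ae_of_all _ fun ω => by
        rw [norm_of_nonneg (exp_pos _).le]; exact exp_mul_norm_sq_le_sum l (Y ω))
  have h_norm : Integrable (fun ω => ‖Y ω‖ ^ 2) μ :=
    (h_exp.const_mul l⁻¹).mono' h_meas (ae_of_all _ fun ω => by
      rw [norm_of_nonneg (by positivity), le_inv_mul_iff₀ hl]
      linarith [add_one_le_exp (l * ‖Y ω‖ ^ 2)])
  refine ⟨h_norm, ?_⟩
  have h_jensen : exp (l * ∫ ω, ‖Y ω‖ ^ 2 ∂μ) ≤ Fintype.card ι * B := by
    calc exp (l * ∫ ω, ‖Y ω‖ ^ 2 ∂μ) = exp (∫ ω, l * ‖Y ω‖ ^ 2 ∂μ) := by rw [integral_const_mul]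
      _ ≤ ∫ ω, exp (l * ‖Y ω‖ ^ 2) ∂μ :=
        convexOn_exp.map_integral_le continuous_exp.continuousOn isClosed_univ
          (ae_of_all _ fun _ => Set.mem_univ _) (h_norm.const_mul l) h_exp
      _ ≤ ∫ ω, ∑ i, exp (l * Y ω i ^ 2) ∂μ :=
        integral_mono h_exp h_sum fun ω => exp_mul_norm_sq_le_sum l (Y ω)
      _ ≤ Fintype.card ι * B := by
        rw [integral_finsetSum _ fun i _ => h_int i]
        grw [Finset.sum_le_sum fun i _ => hB i]
        simp
  rw [le_inv_mul_iff₀ hl]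
  exact (le_log_iff_exp_le ((exp_pos _).trans_le h_jensen)).2 h_jensen

lemma integral_norm_sq_le_of_hasSubgaussianMGF {c : ℝ≥0}
    (h : ∀ i, HasSubgaussianMGF (fun ω => Y ω i) c μ) :
    Integrable (fun ω => ‖Y ω‖ ^ 2) μ ∧
      ∫ ω, ‖Y ω‖ ^ 2 ∂μ ≤ 4 * c * log (√2 * Fintype.card ι) := by
  have hY : AEMeasurable Y μ := aemeasurable_pi_lambda _ fun i => (h i).aemeasurable
  have key : ∀ ε > 0, Integrable (fun ω => ‖Y ω‖ ^ 2) μ ∧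
      ∫ ω, ‖Y ω‖ ^ 2 ∂μ ≤ 4 * (c + ε) * log (√2 * Fintype.card ι) := by
    intro ε hε
    have hl : 0 < (4 * (c + ε))⁻¹ := by positivity
    have hlc : (4 * (c + ε))⁻¹ * c ≤ 1 / 4 := by
      rw [inv_mul_le_iff₀ (by positivity)]; linarith
    have := integral_norm_sq_le_of_integral_exp_mul_sq_le hY hl
      (fun i => (h i).integrable_exp_mul_sq hl.le hlc)
      (fun i => (h i).integral_exp_mul_sq_le hl.le hlc)
    rwa [inv_inv, mul_comm (Fintype.card ι : ℝ)] at this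
  refine ⟨(key 1 one_pos).1, ?_⟩
  -- `c` may vanish, so let `ε → 0`.
  have h_lim : Filter.Tendsto (fun ε : ℝ => 4 * (c + ε) * log (√2 * Fintype.card ι))
      (nhdsWithin 0 (Set.Ioi 0)) (nhds (4 * (c + 0) * log (√2 * Fintype.card ι))) :=
    (Continuous.tendsto (by fun_prop) 0).mono_left nhdsWithin_le_nhds
  rw [add_zero] at h_lim
  exact ge_of_tendsto h_lim (eventually_nhdsWithin_of_forall fun ε hε => (key ε hε).2)

end MaximalInequality

lemma hasSubgaussianMGF_sampleMean_apply {p n : ℕ} {S : Matrix (Fin p) (Fin p) ℝ}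
    (hS : S.PosSemidef) {Ω : Type*} [MeasurableSpace Ω] {μ : Measure Ω}
    {X : Fin n → Ω → Fin p → ℝ} (hXm : ∀ k, Measurable (X k)) (hXi : iIndepFun X μ)
    (hXd : ∀ k, μ.map (X k) = multiGaussian hS) (i : Fin p) :
    HasSubgaussianMGF (fun ω => ((n : ℝ)⁻¹ • ∑ k, X k ω) i) (‖S‖₊ / n) μ := by
  have h_coord : ∀ k, HasSubgaussianMGF (fun ω => X k ω i) ⟨S i i, hS.diag_nonneg⟩ μ := by
    intro k
    have h := hasSubgaussianMGF_multiGaussian_apply hS i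
    rw [← hXd k] at h
    exact h.of_map (hXm k).aemeasurable
  have h_mean := HasSubgaussianMGF.mean_of_iIndepFun
    (hXi.comp (fun _ x => x i) fun _ => measurable_pi_apply i) h_coord
  rw [Fintype.card_fin] at h_mean
  refine (h_mean.mono ?_).congr (ae_of_all _ fun ω => by simp [Finset.sum_apply])
  refine div_le_div_of_nonneg_right ?_ zero_le
  exact Subtype.mk_le_mk.2 ((le_abs_self _).trans (norm_apply_le_l2_opNorm S i i))

/-- **Centering.** For the sample mean `X̄`,
`E ‖M ∘ (X̄ X̄ᵀ)‖ ≤ E ‖M‖ ‖X̄‖∞² ≤ C ‖M‖ ‖Σ‖ log(2p)/n`. -/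
theorem centering_sample_mean :
    ∃ C : ℝ, 0 < C ∧
      ∀ (p n : ℕ), 0 < p → 0 < n →
      ∀ (S : Matrix (Fin p) (Fin p) ℝ) (hS : S.PosSemidef)
        (Ω : Type) (_ : MeasureSpace Ω), IsProbabilityMeasure (ℙ : Measure Ω) →
      ∀ (X : Fin n → Ω → (Fin p → ℝ)),
        (∀ k, Measurable (X k)) →
        iIndepFun X ℙ →
        (∀ k, Measure.map (X k) ℙ = multiGaussian hS) →
      ∀ (M : Matrix (Fin p) (Fin p) ℝ),
        (∫ ω, opNorm (Matrix.hadamard M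
              (vecMulVec ((n : ℝ)⁻¹ • ∑ k, X k ω) ((n : ℝ)⁻¹ • ∑ k, X k ω))) ∂ℙ
            ≤ ∫ ω, opNorm M * (linf ((n : ℝ)⁻¹ • ∑ k, X k ω)) ^ 2 ∂ℙ) ∧
        (∫ ω, opNorm M * (linf ((n : ℝ)⁻¹ • ∑ k, X k ω)) ^ 2 ∂ℙ
            ≤ C * opNorm M * opNorm S * Real.log (2 * p) / n) := by
  refine ⟨4, by norm_num, fun p n hp _ S hS Ω _ _ X hXm hXi hXd M => ?_⟩
  have : NeZero p := ⟨hp.ne'⟩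
  obtain ⟨h_int, h_le⟩ := integral_norm_sq_le_of_hasSubgaussianMGF (μ := ℙ)
    fun i => hasSubgaussianMGF_sampleMean_apply hS hXm hXi hXd i
  simp only [opNorm_eq_l2_opNorm, linf_eq_norm]
  refine ⟨integral_mono_of_nonneg (ae_of_all _ fun ω => norm_nonneg _) (h_int.const_mul _)
    (ae_of_all _ fun ω => l2_opNorm_hadamard_vecMulVec_self_le M _), ?_⟩
  rw [Fintype.card_fin] at h_le
  push_cast at h_le
  rw [integral_const_mul]
  calc ‖M‖ * ∫ ω, ‖(n : ℝ)⁻¹ • ∑ k, X k ω‖ ^ 2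
      ≤ ‖M‖ * (4 * (‖S‖ / n) * log (2 * p)) := by
        gcongr
        exact h_le.trans (by gcongr; exact Real.sqrt_le_iff.2 (by norm_num))
    _ = 4 * ‖M‖ * ‖S‖ * log (2 * p) / n := by ring
end

section
/- Let A be a p × p real matrix. Then ‖A‖ ≤ 12 ⌈ln(2p)⌉² max_{x, y ∈ Reg_p} ⟨A x, y⟩, where Reg_p is the set of regular vectors of the sphere S^{p−1}. -/
open MeasureTheory ProbabilityTheory Matrix

/-- Regular vectors of the sphere `S^{p-1}` with sparsity `s`: unit vectors all of whose
coordinates satisfy `xᵢ² ∈ {0, 1/s}`. -/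
def Reg (p s : ℕ) : Set (Fin p → ℝ) :=
  {x | (∑ i, (x i) ^ 2 = 1) ∧ ∀ i, (x i) ^ 2 = 0 ∨ (x i) ^ 2 = 1 / s}

/-- The set of all regular vectors, `Reg_p = ∪_{s=1}^p Reg_p(s)`. -/
def RegAll (p : ℕ) : Set (Fin p → ℝ) := ⋃ s ∈ Finset.Icc 1 p, Reg p s

/-!
Sort the coordinates of `x` by absolute value, `a₀ ≥ a₁ ≥ ⋯ ≥ a_{p-1} ≥ a_p := 0`, and let
`u_s` be the vector carrying the signs of `x` on the `s + 1` largest coordinates, normalised; it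
is regular. Then `x = ∑ₛ (aₛ - aₛ₊₁) √(s + 1) u_s` with nonnegative coefficients, and summation
by parts, `√(s + 1) - √s ≤ 1 / √(s + 1)` and Cauchy–Schwarz bound the sum of the coefficients
by `‖x‖ √(H_p) ≤ ‖x‖ √(1 + log p)`. Expanding `⟨Ax, y⟩` bilinearly in two such decompositions
gives `‖A‖ ≤ (1 + log p) · max_{u, w regular} ⟨Au, w⟩`, and `1 + log p ≤ 12 ⌈log 2p⌉²`.
-/

open Finset

lemma reg_subset_regAll {p s : ℕ} (hs₀ : 1 ≤ s) (hs : s ≤ p) : Reg p s ⊆ RegAll p :=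
  Set.subset_biUnion_of_mem (u := Reg p) (mem_Icc.mpr ⟨hs₀, hs⟩)

lemma neg_mem_regAll {p : ℕ} {u : Fin p → ℝ} (hu : u ∈ RegAll p) : -u ∈ RegAll p := by
  obtain ⟨s, hs, hsum, hcoord⟩ := Set.mem_iUnion₂.mp hu
  exact Set.mem_iUnion₂.mpr ⟨s, hs, by simpa using hsum, fun i => by simpa using hcoord i⟩

lemma single_mem_regAll {p : ℕ} (i : Fin p) : Pi.single i 1 ∈ RegAll p := by
  refine reg_subset_regAll le_rfl i.pos ⟨by simp [Pi.single_apply], fun j => ?_⟩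
  rcases eq_or_ne j i with rfl | hj <;> simp [*]

lemma sum_sq_eq_one_of_mem_regAll {p : ℕ} {u : Fin p → ℝ} (hu : u ∈ RegAll p) :
    ∑ i, u i ^ 2 = 1 := by
  obtain ⟨s, -, hsum, -⟩ := Set.mem_iUnion₂.mp hu
  exact hsum

lemma sum_range_inv_succ_le_one_add_log (n : ℕ) :
    ∑ s ∈ range n, 1 / ((s : ℝ) + 1) ≤ 1 + Real.log n := by
  have h := harmonic_le_one_add_log n
  simp only [harmonic, Rat.cast_sum, Rat.cast_inv, Rat.cast_natCast] at h
  simpa [one_div] using h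

lemma sqrt_succ_sub_sqrt_le (s : ℕ) : √((s : ℝ) + 1) - √s ≤ 1 / √((s : ℝ) + 1) := by
  have hpos : 0 < √((s : ℝ) + 1) := by positivity
  have hmono : √(s : ℝ) * √s ≤ √s * √((s : ℝ) + 1) := by gcongr; linarith
  rw [le_div_iff₀ hpos]
  nlinarith [Real.mul_self_sqrt (by positivity : (0 : ℝ) ≤ s + 1),
    Real.mul_self_sqrt (Nat.cast_nonneg s : (0 : ℝ) ≤ s)]

lemma sum_range_sub_mul_sqrt_eq (a : ℕ → ℝ) {n : ℕ} (hn : a n = 0) :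
    ∑ s ∈ range n, (a s - a (s + 1)) * √((s : ℝ) + 1) =
      ∑ s ∈ range n, a s * (√((s : ℝ) + 1) - √s) := by
  have hshift : ∑ s ∈ range n, a (s + 1) * √((s : ℝ) + 1) = ∑ s ∈ range n, a s * √s := by
    have h := (sum_range_succ' (fun s => a s * √(s : ℝ)) n).symm.trans
      (sum_range_succ (fun s => a s * √(s : ℝ)) n)
    simpa [hn] using h
  simp only [sub_mul, mul_sub, sum_sub_distrib, hshift]

lemma sum_range_sub_mul_sqrt_le (a : ℕ → ℝ) {n : ℕ} (ha : ∀ s, 0 ≤ a s) (hn : a n = 0) :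
    ∑ s ∈ range n, (a s - a (s + 1)) * √((s : ℝ) + 1) ≤
      √(1 + Real.log n) * √(∑ s ∈ range n, a s ^ 2) := by
  rw [sum_range_sub_mul_sqrt_eq a hn]
  calc ∑ s ∈ range n, a s * (√((s : ℝ) + 1) - √s)
      ≤ ∑ s ∈ range n, a s * (1 / √((s : ℝ) + 1)) := by
        gcongr with s
        · exact ha s
        · exact sqrt_succ_sub_sqrt_le s
    _ ≤ √(∑ s ∈ range n, a s ^ 2) * √(∑ s ∈ range n, (1 / √((s : ℝ) + 1)) ^ 2) :=
        Real.sum_mul_le_sqrt_mul_sqrt _ _ _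
    _ ≤ √(∑ s ∈ range n, a s ^ 2) * √(1 + Real.log n) := by
        gcongr
        simpa [div_pow, Real.sq_sqrt, Nat.cast_add_one_pos, le_of_lt]
          using sum_range_inv_succ_le_one_add_log n
    _ = _ := mul_comm _ _

section Decomposition

variable {p : ℕ}

-- Unlike `Real.sign`, never `0`: this keeps the vectors `headVec` below regular.
noncomputable def signOne (t : ℝ) : ℝ := if t < 0 then -1 else 1

lemma signOne_sq (t : ℝ) : signOne t ^ 2 = 1 := by
  unfold signOne; split_ifs <;> norm_num

lemma signOne_mul_abs (t : ℝ) : signOne t * |t| = t := by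
  unfold signOne
  split_ifs with h
  · rw [abs_of_neg h]; ring
  · rw [abs_of_nonneg (not_lt.mp h), one_mul]

noncomputable def sortedAbs (σ : Equiv.Perm (Fin p)) (x : Fin p → ℝ) (s : ℕ) : ℝ :=
  if h : s < p then |x (σ ⟨s, h⟩)| else 0

noncomputable def headVec (σ : Equiv.Perm (Fin p)) (x : Fin p → ℝ) (s : ℕ) : Fin p → ℝ :=
  fun i => if (σ.symm i : ℕ) ≤ s then signOne (x i) / √((s : ℝ) + 1) else 0

variable (σ : Equiv.Perm (Fin p)) (x : Fin p → ℝ)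

lemma sortedAbs_nonneg (s : ℕ) : 0 ≤ sortedAbs σ x s := by
  unfold sortedAbs; split_ifs <;> simp

lemma sortedAbs_self : sortedAbs σ x p = 0 := by simp [sortedAbs]

lemma sortedAbs_symm_apply (i : Fin p) : sortedAbs σ x (σ.symm i) = |x i| := by
  simp [sortedAbs]

lemma sum_range_sortedAbs_sq : ∑ s ∈ range p, sortedAbs σ x s ^ 2 = ∑ i, x i ^ 2 := by
  rw [← Fin.sum_univ_eq_sum_range (fun s => sortedAbs σ x s ^ 2) p,
    ← Equiv.sum_comp σ (fun i => x i ^ 2)]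
  simp [sortedAbs]

lemma sortedAbs_antitone (hσ : Monotone ((fun i => -|x i|) ∘ σ)) :
    Antitone (sortedAbs σ x) := by
  refine antitone_nat_of_succ_le fun s => ?_
  by_cases h : s + 1 < p
  · simp only [sortedAbs, dif_pos h, dif_pos (Nat.lt_of_succ_lt h)]
    simpa using hσ (show (⟨s, Nat.lt_of_succ_lt h⟩ : Fin p) ≤ ⟨s + 1, h⟩ from Nat.le_succ s)
  · simpa [sortedAbs, h] using sortedAbs_nonneg σ x s

lemma headVec_sq (s : ℕ) (i : Fin p) :
    headVec σ x s i ^ 2 = if (σ.symm i : ℕ) ≤ s then 1 / ((s : ℝ) + 1) else 0 := by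
  unfold headVec
  split_ifs
  · rw [div_pow, signOne_sq, Real.sq_sqrt (by positivity)]
  · simp

lemma headVec_mem_reg {s : ℕ} (hs : s < p) : headVec σ x s ∈ Reg p (s + 1) := by
  refine ⟨?_, fun i => ?_⟩
  · have hhead : (range p).filter (· ≤ s) = range (s + 1) := by ext; simp; omega
    simp only [headVec_sq]
    rw [← Equiv.sum_comp σ]
    simp only [Equiv.symm_apply_apply]
    rw [Fin.sum_univ_eq_sum_range (fun k => if k ≤ s then 1 / ((s : ℝ) + 1) else 0) p]
    simp only [sum_ite, sum_const_zero, add_zero, sum_const, nsmul_eq_mul, hhead, card_range]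
    push_cast
    field_simp
  · rw [headVec_sq]
    split_ifs
    · right; push_cast; rfl
    · left; rfl

lemma sum_smul_headVec :
    ∑ s ∈ range p, ((sortedAbs σ x s - sortedAbs σ x (s + 1)) * √((s : ℝ) + 1)) •
      headVec σ x s = x := by
  funext i
  have hterm : ∀ s, (((sortedAbs σ x s - sortedAbs σ x (s + 1)) * √((s : ℝ) + 1)) •
      headVec σ x s) i =
      if (σ.symm i : ℕ) ≤ s then (sortedAbs σ x s - sortedAbs σ x (s + 1)) * signOne (x i)
      else 0 := by
    intro s
    simp only [Pi.smul_apply, smul_eq_mul, headVec]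
    split_ifs
    · field_simp
    · simp
  have hIco : (range p).filter (fun s => (σ.symm i : ℕ) ≤ s) = Ico (σ.symm i : ℕ) p := by
    ext; simp; omega
  rw [Finset.sum_apply, sum_congr rfl fun s _ => hterm s, ← sum_filter, hIco, ← sum_mul,
    sum_Ico_eq_sub _ (σ.symm i).isLt.le, sum_range_sub', sum_range_sub', sortedAbs_self,
    sortedAbs_symm_apply, sub_zero, sub_sub_cancel, mul_comm, signOne_mul_abs]

end Decomposition

theorem exists_nonneg_sum_regular {p : ℕ} (x : Fin p → ℝ) :
    ∃ c : ℕ → ℝ, ∃ u : ℕ → Fin p → ℝ,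
      (∀ s ∈ range p, 0 ≤ c s ∧ u s ∈ RegAll p) ∧ ∑ s ∈ range p, c s • u s = x ∧
      ∑ s ∈ range p, c s ≤ √(1 + Real.log p) * √(∑ i, x i ^ 2) := by
  set σ := Tuple.sort (fun i => -|x i|)
  refine ⟨fun s => (sortedAbs σ x s - sortedAbs σ x (s + 1)) * √((s : ℝ) + 1),
    headVec σ x, fun s hs => ⟨?_, ?_⟩, sum_smul_headVec σ x, ?_⟩
  · have := sortedAbs_antitone σ x (Tuple.monotone_sort _) (Nat.le_succ s)
    exact mul_nonneg (sub_nonneg.mpr this) (Real.sqrt_nonneg _)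
  · have hs := mem_range.mp hs
    exact reg_subset_regAll (Nat.le_add_left 1 s) hs (headVec_mem_reg σ x hs)
  · rw [← sum_range_sortedAbs_sq σ x]
    exact sum_range_sub_mul_sqrt_le _ (sortedAbs_nonneg σ x) (sortedAbs_self σ x)

lemma mulVec_sum_smul_dotProduct_sum_smul_le {m n ι κ : Type*} [Fintype m] [Fintype n]
    (A : Matrix m n ℝ) {s : Finset ι} {t : Finset κ} {c : ι → ℝ} {d : κ → ℝ}
    {u : ι → n → ℝ} {w : κ → m → ℝ} {M : ℝ} (hc : ∀ i ∈ s, 0 ≤ c i) (hd : ∀ j ∈ t, 0 ≤ d j)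
    (hM : ∀ i ∈ s, ∀ j ∈ t, A *ᵥ u i ⬝ᵥ w j ≤ M) :
    A *ᵥ (∑ i ∈ s, c i • u i) ⬝ᵥ ∑ j ∈ t, d j • w j ≤ (∑ i ∈ s, c i) * (∑ j ∈ t, d j) * M := by
  simp only [mulVec_sum, mulVec_smul, sum_dotProduct, dotProduct_sum, smul_dotProduct,
    dotProduct_smul, smul_eq_mul]
  calc ∑ j ∈ t, d j * ∑ i ∈ s, c i * A *ᵥ u i ⬝ᵥ w j
      ≤ ∑ j ∈ t, d j * ∑ i ∈ s, c i * M := by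
        gcongr with j hj i hi
        · exact hd j hj
        · exact hc i hi
        · exact hM i hi j hj
    _ = _ := by rw [← sum_mul, ← sum_mul]; ring

theorem dotProduct_mulVec_le_of_regular {p : ℕ} (A : Matrix (Fin p) (Fin p) ℝ) {M : ℝ}
    (hM₀ : 0 ≤ M) (hM : ∀ u ∈ RegAll p, ∀ w ∈ RegAll p, A *ᵥ u ⬝ᵥ w ≤ M) (x y : Fin p → ℝ) :
    A *ᵥ x ⬝ᵥ y ≤ (1 + Real.log p) * M * √(∑ i, x i ^ 2) * √(∑ i, y i ^ 2) := by
  obtain ⟨c, u, hcu, hx, hc⟩ := exists_nonneg_sum_regular x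
  obtain ⟨d, w, hdw, hy, hd⟩ := exists_nonneg_sum_regular y
  have hlog : √(1 + Real.log p) * √(1 + Real.log p) = 1 + Real.log p :=
    Real.mul_self_sqrt (by positivity)
  calc A *ᵥ x ⬝ᵥ y
      = A *ᵥ (∑ s ∈ range p, c s • u s) ⬝ᵥ ∑ r ∈ range p, d r • w r := by rw [hx, hy]
    _ ≤ (∑ s ∈ range p, c s) * (∑ r ∈ range p, d r) * M :=
        mulVec_sum_smul_dotProduct_sum_smul_le A (fun s hs => (hcu s hs).1)
          (fun r hr => (hdw r hr).1) fun s hs r hr => hM _ (hcu s hs).2 _ (hdw r hr).2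
    _ ≤ (√(1 + Real.log p) * √(∑ i, x i ^ 2)) * (√(1 + Real.log p) * √(∑ i, y i ^ 2)) * M := by
        have hc₀ := sum_nonneg fun s hs => (hcu s hs).1
        have hd₀ := sum_nonneg fun r hr => (hdw r hr).1
        gcongr
    _ = _ := by linear_combination (√(∑ i, x i ^ 2) * √(∑ i, y i ^ 2) * M) * hlog

section OperatorNorm

open scoped RealInnerProductSpace

variable {n : Type*} [Fintype n]

lemma EuclideanSpace.real_norm_eq_sqrt_sum_sq (v : EuclideanSpace ℝ n) :
    ‖v‖ = √(∑ i, v i ^ 2) := by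
  rw [← EuclideanSpace.real_norm_sq_eq, Real.sqrt_sq (norm_nonneg v)]

variable [DecidableEq n] (A : Matrix n n ℝ)

lemma dotProduct_mulVec_le_norm_toEuclideanCLM (x y : n → ℝ) :
    A *ᵥ x ⬝ᵥ y ≤ ‖toEuclideanCLM (𝕜 := ℝ) A‖ * √(∑ i, x i ^ 2) * √(∑ i, y i ^ 2) := by
  set T := toEuclideanCLM (𝕜 := ℝ) A
  have hinner : A *ᵥ x ⬝ᵥ y = ⟪WithLp.toLp 2 y, T (WithLp.toLp 2 x)⟫ := by
    rw [inner_toEuclideanCLM, dotProduct_comm]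
  calc A *ᵥ x ⬝ᵥ y ≤ ‖WithLp.toLp 2 y‖ * ‖T (WithLp.toLp 2 x)‖ :=
        hinner ▸ real_inner_le_norm _ _
    _ ≤ ‖WithLp.toLp 2 y‖ * (‖T‖ * ‖WithLp.toLp 2 x‖) := by gcongr; exact T.le_opNorm _
    _ = _ := by simp only [EuclideanSpace.real_norm_eq_sqrt_sum_sq]; ring

lemma norm_toEuclideanCLM_le_of_dotProduct_le {C : ℝ} (hC : 0 ≤ C)
    (h : ∀ x y : n → ℝ, A *ᵥ x ⬝ᵥ y ≤ C * √(∑ i, x i ^ 2) * √(∑ i, y i ^ 2)) :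
    ‖toEuclideanCLM (𝕜 := ℝ) A‖ ≤ C := by
  refine ContinuousLinearMap.opNorm_le_bound _ hC fun v => ?_
  set w := toEuclideanCLM (𝕜 := ℝ) A v
  have hsq : ‖w‖ * ‖w‖ ≤ C * ‖v‖ * ‖w‖ := by
    rw [← real_inner_self_eq_norm_mul_norm]
    conv_lhs => rw [inner_toEuclideanCLM, dotProduct_comm]
    simpa only [EuclideanSpace.real_norm_eq_sqrt_sum_sq] using h v.ofLp w.ofLp
  nlinarith [mul_nonneg hC (norm_nonneg v), norm_nonneg w]

end OperatorNorm

lemma one_add_log_le_twelve_mul_ceil_log_sq {p : ℕ} (hp : 0 < p) :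
    1 + Real.log p ≤ 12 * (⌈Real.log (2 * p)⌉₊ : ℝ) ^ 2 := by
  have hp' : (1 : ℝ) ≤ p := by exact_mod_cast hp
  have hlog : Real.log p ≤ Real.log (2 * p) := Real.log_le_log (by positivity) (by linarith)
  have hceil : Real.log (2 * p) ≤ ⌈Real.log (2 * p)⌉₊ := Nat.le_ceil _
  have hone : (1 : ℝ) ≤ ⌈Real.log (2 * p)⌉₊ :=
    Nat.one_le_cast.mpr (Nat.ceil_pos.mpr (Real.log_pos (by linarith)))
  nlinarith

/-- **Computing the operator norm on regular vectors.**
`‖A‖ ≤ 12 ⌈ln(2p)⌉² max_{x,y ∈ Reg_p} ⟨Ax, y⟩`. -/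
theorem opNorm_le_of_regular
    (p : ℕ) (hp : 0 < p) (A : Matrix (Fin p) (Fin p) ℝ) :
    opNorm A ≤ 12 * (⌈Real.log (2 * p)⌉₊ : ℝ) ^ 2 *
      sSup {r : ℝ | ∃ x ∈ RegAll p, ∃ y ∈ RegAll p, r = A.mulVec x ⬝ᵥ y} := by
  set S := {r : ℝ | ∃ x ∈ RegAll p, ∃ y ∈ RegAll p, r = A.mulVec x ⬝ᵥ y}
  have hbdd : BddAbove S := by
    refine ⟨opNorm A, ?_⟩
    rintro _ ⟨x, hx, y, hy, rfl⟩
    simpa [opNorm, sum_sq_eq_one_of_mem_regAll, hx, hy] using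
      dotProduct_mulVec_le_norm_toEuclideanCLM A x y
  have hM : ∀ u ∈ RegAll p, ∀ w ∈ RegAll p, A *ᵥ u ⬝ᵥ w ≤ sSup S :=
    fun u hu w hw => le_csSup hbdd ⟨u, hu, w, hw, rfl⟩
  have hM₀ : 0 ≤ sSup S := by
    have he := single_mem_regAll (⟨0, hp⟩ : Fin p)
    have hneg := hM _ (neg_mem_regAll he) _ he
    rw [mulVec_neg, neg_dotProduct] at hneg
    linarith [hM _ he _ he]
  calc opNorm A ≤ (1 + Real.log p) * sSup S :=
        norm_toEuclideanCLM_le_of_dotProduct_le A (by positivity)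
          (dotProduct_mulVec_le_of_regular A hM₀ hM)
    _ ≤ _ := by gcongr; exact one_add_log_le_twelve_mul_ceil_log_sq hp
end

section
/- Let A be a random p × p real matrix such that A and its transpose A^T are identically distributed. Then for every t ≥ 0, P{ ‖A‖ ≥ t } ≤ 2 P{ 12 ⌈ln(2p)⌉² · max over pairs r ≤ s in {1,...,p} of max_{x ∈ Reg_p(r), y ∈ Reg_p(s)} ⟨A x, y⟩ ≥ t }. -/
/-!
Cut a vector `x` of norm at most one into `K = ⌈ln 2p⌉` level pieces: coordinate `i` has level
`k` when `e^{-k-1} < |xᵢ| ≤ e^{-k}`, the last level absorbing all smaller coordinates. A piece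
supported on `S` with entries at most `e^{-k}` is dominated, against any fixed functional, by
`e^{-k} √|S|` times the normalized sign vector on `S`, which is regular; and `|S| ≤ e^{2k+2}`
because `‖x‖ ≤ 1` (on the last level `|S| ≤ p ≤ e^{2K}`), so the factor is at most `e`.
Linearizing both arguments this way bounds each of the `K²` terms `⟨A xₖ, yₗ⟩` by `e²` times the
largest pairing of regular vectors. Writing `M(A)` for the maximum in the statement, where
`r ≤ s`, the pairs with `r > s` are covered by `M(Aᵀ)`: `‖A‖ ≤ 12 K² max(M(A), M(Aᵀ))`, and the
union bound together with `A ~ Aᵀ` gives the factor `2`.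
-/

open MeasureTheory ProbabilityTheory Matrix

/-- Matrices over ℝ carry the product measurable structure (entrywise). -/
instance matrixMeasurableSpace {p : ℕ} : MeasurableSpace (Matrix (Fin p) (Fin p) ℝ) :=
  MeasurableSpace.pi (δ := Fin p) (X := fun _ => Fin p → ℝ)

open Finset Real

section RegularVectors

variable {p : ℕ}

theorem Reg.neg {s : ℕ} {x : Fin p → ℝ} (hx : x ∈ Reg p s) : -x ∈ Reg p s := by
  simpa [Reg, neg_sq] using hx

theorem Reg.finite (p s : ℕ) : (Reg p s).Finite := by
  refine (Set.Finite.pi (t := fun _ : Fin p => {0, √(1 / s), -√(1 / s)})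
    fun _ => Set.toFinite _).subset fun x hx i _ => ?_
  rcases hx.2 i with h | h
  · simp [pow_eq_zero_iff two_ne_zero |>.1 h]
  · rcases eq_or_eq_neg_of_sq_eq_sq (x i) (√(1 / s)) (by rw [h, sq_sqrt (by positivity)])
      with h' | h' <;> simp [h']

theorem card_mem_Icc_one {S : Finset (Fin p)} (hS : S.Nonempty) : #S ∈ Icc 1 p :=
  mem_Icc.2 ⟨hS.card_pos, (card_le_univ S).trans_eq (Fintype.card_fin p)⟩

theorem transpose_mulVec_dotProduct (B : Matrix (Fin p) (Fin p) ℝ) (x y : Fin p → ℝ) :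
    Bᵀ *ᵥ y ⬝ᵥ x = B *ᵥ x ⬝ᵥ y := by
  rw [dotProduct_comm, dotProduct_transpose_mulVec, dotProduct_comm]

def regPairs (p : ℕ) : Set ((Fin p → ℝ) × (Fin p → ℝ)) :=
  {q | ∃ r ∈ Icc 1 p, ∃ s ∈ Icc 1 p, r ≤ s ∧ q.1 ∈ Reg p r ∧ q.2 ∈ Reg p s}

theorem regPairs_finite (p : ℕ) : (regPairs p).Finite := by
  refine (((Icc 1 p).finite_toSet.biUnion fun r _ => Reg.finite p r).prod
    ((Icc 1 p).finite_toSet.biUnion fun s _ => Reg.finite p s)).subset ?_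
  rintro ⟨x, y⟩ ⟨r, hr, s, hs, -, hx, hy⟩
  exact ⟨Set.mem_biUnion hr hx, Set.mem_biUnion hs hy⟩

instance (p : ℕ) : Finite (regPairs p) := (regPairs_finite p).to_subtype

noncomputable def regSup (B : Matrix (Fin p) (Fin p) ℝ) : ℝ :=
  sSup {v : ℝ | ∃ r ∈ Finset.Icc 1 p, ∃ s ∈ Finset.Icc 1 p, r ≤ s ∧
      ∃ x ∈ Reg p r, ∃ y ∈ Reg p s, v = B.mulVec x ⬝ᵥ y}

theorem regSup_eq_iSup (B : Matrix (Fin p) (Fin p) ℝ) :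
    regSup B = ⨆ q : regPairs p, B *ᵥ q.1.1 ⬝ᵥ q.1.2 := by
  rw [regSup, ← sSup_image' (f := fun q : (Fin p → ℝ) × (Fin p → ℝ) => B *ᵥ q.1 ⬝ᵥ q.2)]
  congr 1
  ext v
  constructor
  · rintro ⟨r, hr, s, hs, hrs, x, hx, y, hy, rfl⟩
    exact ⟨(x, y), ⟨r, hr, s, hs, hrs, hx, hy⟩, rfl⟩
  · rintro ⟨⟨x, y⟩, ⟨r, hr, s, hs, hrs, hx, hy⟩, rfl⟩
    exact ⟨r, hr, s, hs, hrs, x, hx, y, hy, rfl⟩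

theorem mulVec_dotProduct_le_regSup (B : Matrix (Fin p) (Fin p) ℝ) {r s : ℕ} (hr : r ∈ Icc 1 p)
    (hs : s ∈ Icc 1 p) (hrs : r ≤ s) {x y : Fin p → ℝ} (hx : x ∈ Reg p r) (hy : y ∈ Reg p s) :
    B *ᵥ x ⬝ᵥ y ≤ regSup B := by
  rw [regSup_eq_iSup]
  exact le_ciSup (f := fun q : regPairs p => B *ᵥ q.1.1 ⬝ᵥ q.1.2) (Finite.bddAbove_range _)
    ⟨(x, y), r, hr, s, hs, hrs, hx, hy⟩

theorem regSup_nonneg (B : Matrix (Fin p) (Fin p) ℝ) : 0 ≤ regSup B := by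
  rcases isEmpty_or_nonempty (regPairs p) with h | ⟨⟨⟨x, y⟩, r, hr, s, hs, hrs, hx, hy⟩⟩
  · rw [regSup_eq_iSup, Real.iSup_of_isEmpty]
  · have h₁ := mulVec_dotProduct_le_regSup B hr hs hrs hx hy
    have h₂ := mulVec_dotProduct_le_regSup B hr hs hrs hx (Reg.neg hy)
    rw [dotProduct_neg] at h₂
    linarith

theorem mulVec_dotProduct_le_max_regSup (B : Matrix (Fin p) (Fin p) ℝ) {r s : ℕ}
    (hr : r ∈ Icc 1 p) (hs : s ∈ Icc 1 p) {x y : Fin p → ℝ} (hx : x ∈ Reg p r)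
    (hy : y ∈ Reg p s) : B *ᵥ x ⬝ᵥ y ≤ max (regSup B) (regSup Bᵀ) := by
  rcases le_total r s with hrs | hsr
  · exact le_max_of_le_left (mulVec_dotProduct_le_regSup B hr hs hrs hx hy)
  · rw [← transpose_mulVec_dotProduct]
    exact le_max_of_le_right (mulVec_dotProduct_le_regSup Bᵀ hs hr hsr hy hx)

end RegularVectors

section SignVectors

variable {p : ℕ}

/-- Zeros of `h` get the sign `+1`, so that the result is regular. -/
noncomputable def signVec (h : Fin p → ℝ) (S : Finset (Fin p)) : Fin p → ℝ :=
  fun i => if i ∈ S then (if 0 ≤ h i then 1 else -1) / √(#S : ℝ) else 0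

variable (h : Fin p → ℝ) (S : Finset (Fin p))

theorem signVec_sq (i : Fin p) : signVec h S i ^ 2 = if i ∈ S then 1 / (#S : ℝ) else 0 := by
  unfold signVec
  split_ifs <;> simp [div_pow]

theorem signVec_mem_Reg (hS : S.Nonempty) : signVec h S ∈ Reg p #S := by
  refine ⟨?_, fun i => ?_⟩
  · simp_rw [signVec_sq, sum_ite_mem, univ_inter, sum_const, nsmul_eq_mul]
    field_simp [hS.card_pos.ne']
  · rw [signVec_sq]
    split_ifs <;> simp

theorem dotProduct_signVec : h ⬝ᵥ signVec h S = (∑ i ∈ S, |h i|) / √(#S : ℝ) := by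
  simp only [dotProduct, signVec, mul_ite, mul_zero, sum_ite_mem, univ_inter, sum_div]
  refine sum_congr rfl fun i _ => ?_
  split_ifs with hi
  · rw [abs_of_nonneg hi]; ring
  · rw [abs_of_neg (not_le.1 hi)]; ring

variable {h S}

theorem dotProduct_le_mul_dotProduct_signVec (hS : S.Nonempty) {z : Fin p → ℝ} {c : ℝ}
    (hz₀ : ∀ i ∉ S, z i = 0) (hz : ∀ i, |z i| ≤ c) :
    h ⬝ᵥ z ≤ c * √(#S : ℝ) * (h ⬝ᵥ signVec h S) := by
  have hS' : √(#S : ℝ) ≠ 0 := (sqrt_pos.2 (by exact_mod_cast hS.card_pos)).ne'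
  calc h ⬝ᵥ z = ∑ i ∈ S, h i * z i :=
        (sum_subset (subset_univ S) fun i _ hi => by simp [hz₀ i hi]).symm
    _ ≤ ∑ i ∈ S, c * |h i| := sum_le_sum fun i _ =>
        (le_abs_self _).trans (by rw [abs_mul, mul_comm c]; gcongr; exact hz i)
    _ = c * √(#S : ℝ) * (h ⬝ᵥ signVec h S) := by
        rw [dotProduct_signVec, ← mul_sum]
        field_simp

end SignVectors

section Linearization

variable {p : ℕ} {B : Matrix (Fin p) (Fin p) ℝ} {N : ℝ}

theorem mulVec_dotProduct_le_of_support
    (hN : ∀ r ∈ Icc 1 p, ∀ s ∈ Icc 1 p, ∀ x ∈ Reg p r, ∀ y ∈ Reg p s, B *ᵥ x ⬝ᵥ y ≤ N)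
    {S T : Finset (Fin p)} (hS : S.Nonempty) (hT : T.Nonempty) {z w : Fin p → ℝ} {a b : ℝ}
    (hz₀ : ∀ i ∉ S, z i = 0) (hz : ∀ i, |z i| ≤ a) (hw₀ : ∀ j ∉ T, w j = 0)
    (hw : ∀ j, |w j| ≤ b) :
    B *ᵥ z ⬝ᵥ w ≤ a * √(#S : ℝ) * (b * √(#T : ℝ) * N) := by
  set u := signVec (Bᵀ *ᵥ w) S
  set v := signVec (B *ᵥ u) T
  have ha : 0 ≤ a := hS.elim fun i _ => (abs_nonneg _).trans (hz i)
  have hb : 0 ≤ b := hT.elim fun j _ => (abs_nonneg _).trans (hw j)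
  calc B *ᵥ z ⬝ᵥ w = Bᵀ *ᵥ w ⬝ᵥ z := (transpose_mulVec_dotProduct B z w).symm
    _ ≤ a * √(#S : ℝ) * (Bᵀ *ᵥ w ⬝ᵥ u) := dotProduct_le_mul_dotProduct_signVec hS hz₀ hz
    _ = a * √(#S : ℝ) * (B *ᵥ u ⬝ᵥ w) := by rw [transpose_mulVec_dotProduct]
    _ ≤ a * √(#S : ℝ) * (b * √(#T : ℝ) * (B *ᵥ u ⬝ᵥ v)) := by
        gcongr
        exact dotProduct_le_mul_dotProduct_signVec hT hw₀ hw
    _ ≤ a * √(#S : ℝ) * (b * √(#T : ℝ) * N) := by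
        gcongr
        exact hN _ (card_mem_Icc_one hS) _ (card_mem_Icc_one hT) _ (signVec_mem_Reg _ _ hS) _
          (signVec_mem_Reg _ _ hT)

end Linearization

section Levels

noncomputable def level (K : ℕ) (a : ℝ) : ℕ := min (K - 1) ⌊-log |a|⌋₊

variable {K : ℕ} {a : ℝ}

theorem level_lt (hK : 0 < K) (a : ℝ) : level K a < K :=
  (min_le_left _ _).trans_lt (Nat.sub_lt hK one_pos)

theorem abs_le_exp_neg_level (ha : |a| ≤ 1) : |a| ≤ exp (-level K a) := by
  rcases eq_or_ne a 0 with rfl | ha₀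
  · simp [(exp_pos _).le]
  rw [← log_le_iff_le_exp (abs_pos.2 ha₀), le_neg]
  calc (level K a : ℝ) ≤ ⌊-log |a|⌋₊ := by exact_mod_cast min_le_right _ _
    _ ≤ -log |a| := Nat.floor_le (neg_nonneg.2 (log_nonpos (abs_nonneg a) ha))

theorem exp_neg_level_succ_lt_abs (ha : a ≠ 0) (h : level K a + 1 < K) :
    exp (-(level K a + 1)) < |a| := by
  have hlevel : level K a = ⌊-log |a|⌋₊ := min_eq_right (by unfold level at h; omega)
  rw [← lt_log_iff_exp_lt (abs_pos.2 ha), neg_lt, hlevel]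
  exact_mod_cast Nat.lt_floor_add_one _

variable {p : ℕ} (K) (k : ℕ) (x : Fin p → ℝ)

noncomputable def levelPart : Fin p → ℝ := fun i => if level K (x i) = k then x i else 0

noncomputable def levelSupport : Finset (Fin p) := univ.filter fun i => x i ≠ 0 ∧ level K (x i) = k

theorem sum_levelPart (hK : 0 < K) : ∑ k ∈ range K, levelPart K k x = x := by
  ext i
  simp [levelPart, Finset.sum_apply, level_lt hK]

variable {K k x}

theorem levelPart_eq_zero {i : Fin p} (hi : i ∉ levelSupport K k x) : levelPart K k x i = 0 := by
  simp only [levelSupport, mem_filter, mem_univ, true_and, not_and', not_not] at hi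
  simpa [levelPart] using hi

theorem abs_levelPart_le {i : Fin p} (hx : |x i| ≤ 1) : |levelPart K k x i| ≤ exp (-k) := by
  unfold levelPart
  split_ifs with h
  · exact h ▸ abs_le_exp_neg_level hx
  · simp [(exp_pos _).le]

theorem abs_le_one_of_sum_sq_le_one (hx : ∑ i, x i ^ 2 ≤ 1) (i : Fin p) : |x i| ≤ 1 :=
  (sq_le_one_iff_abs_le_one _).1 <|
    (single_le_sum (fun j _ => sq_nonneg (x j)) (mem_univ i)).trans hx

theorem exp_neg_mul_sqrt_card_levelSupport_le (hK : √(p : ℝ) ≤ exp K)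
    (hx : ∑ i, x i ^ 2 ≤ 1) (hk : k < K) :
    exp (-k) * √(#(levelSupport K k x) : ℝ) ≤ exp 1 := by
  set S := levelSupport K k x
  suffices h : √(#S : ℝ) ≤ exp (k + 1) by
    calc exp (-k) * √(#S : ℝ) ≤ exp (-k) * exp (k + 1) := by gcongr
      _ = exp 1 := by rw [← exp_add]; ring_nf
  rcases (Nat.succ_le_of_lt hk).lt_or_eq with hk' | hk'
  · have hsq : ∀ i ∈ S, exp (-(k + 1)) ^ 2 ≤ x i ^ 2 := by
      intro i hi
      obtain ⟨hi₀, hik⟩ := (mem_filter.1 hi).2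
      have hlt : exp (-(k + 1)) < |x i| := hik ▸ exp_neg_level_succ_lt_abs hi₀ (hik ▸ hk')
      rw [← sq_abs (x i)]
      exact pow_le_pow_left₀ (exp_pos _).le hlt.le 2
    have hcard : (#S : ℝ) * exp (-(k + 1)) ^ 2 ≤ 1 := calc
      (#S : ℝ) * exp (-(k + 1)) ^ 2 = ∑ _i ∈ S, exp (-(k + 1)) ^ 2 := by
        rw [sum_const, nsmul_eq_mul]
      _ ≤ ∑ i ∈ S, x i ^ 2 := sum_le_sum hsq
      _ ≤ ∑ i, x i ^ 2 := sum_le_sum_of_subset_of_nonneg (subset_univ S) fun i _ _ => sq_nonneg _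
      _ ≤ 1 := hx
    rw [exp_neg, inv_pow, ← div_eq_mul_inv, div_le_one (by positivity)] at hcard
    exact (sqrt_le_left (exp_pos _).le).2 hcard
  · calc √(#S : ℝ) ≤ √(p : ℝ) :=
          sqrt_le_sqrt (by exact_mod_cast (card_le_univ S).trans_eq (Fintype.card_fin p))
      _ ≤ exp K := hK
      _ = exp (k + 1) := by rw [← hk']; push_cast; rfl

end Levels

section Deterministic

variable {p : ℕ} {B : Matrix (Fin p) (Fin p) ℝ} {N : ℝ}

theorem levelPart_mulVec_dotProduct_le (hN₀ : 0 ≤ N)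
    (hN : ∀ r ∈ Icc 1 p, ∀ s ∈ Icc 1 p, ∀ x ∈ Reg p r, ∀ y ∈ Reg p s, B *ᵥ x ⬝ᵥ y ≤ N)
    {K k l : ℕ} (hK : √(p : ℝ) ≤ exp K) {x y : Fin p → ℝ} (hx : ∑ i, x i ^ 2 ≤ 1)
    (hy : ∑ i, y i ^ 2 ≤ 1) (hk : k < K) (hl : l < K) :
    B *ᵥ levelPart K k x ⬝ᵥ levelPart K l y ≤ exp 1 * (exp 1 * N) := by
  rcases (levelSupport K k x).eq_empty_or_nonempty with hS | hS
  · have : levelPart K k x = 0 := funext fun i => levelPart_eq_zero (hS ▸ notMem_empty i)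
    simp only [this, mulVec_zero, zero_dotProduct]
    positivity
  rcases (levelSupport K l y).eq_empty_or_nonempty with hT | hT
  · have : levelPart K l y = 0 := funext fun i => levelPart_eq_zero (hT ▸ notMem_empty i)
    simp only [this, dotProduct_zero]
    positivity
  calc _ ≤ exp (-k) * √(#(levelSupport K k x) : ℝ) *
        (exp (-l) * √(#(levelSupport K l y) : ℝ) * N) :=
        mulVec_dotProduct_le_of_support hN hS hT (fun _ => levelPart_eq_zero)
          (fun i => abs_levelPart_le (abs_le_one_of_sum_sq_le_one hx i))
          (fun _ => levelPart_eq_zero)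
          (fun j => abs_levelPart_le (abs_le_one_of_sum_sq_le_one hy j))
    _ ≤ exp 1 * (exp 1 * N) := by
        gcongr
        · exact exp_neg_mul_sqrt_card_levelSupport_le hK hx hk
        · exact exp_neg_mul_sqrt_card_levelSupport_le hK hy hl

theorem mulVec_dotProduct_le_of_forall_reg (hN₀ : 0 ≤ N)
    (hN : ∀ r ∈ Icc 1 p, ∀ s ∈ Icc 1 p, ∀ x ∈ Reg p r, ∀ y ∈ Reg p s, B *ᵥ x ⬝ᵥ y ≤ N)
    {K : ℕ} (hK₀ : 0 < K) (hK : √(p : ℝ) ≤ exp K) {x y : Fin p → ℝ} (hx : ∑ i, x i ^ 2 ≤ 1)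
    (hy : ∑ i, y i ^ 2 ≤ 1) :
    B *ᵥ x ⬝ᵥ y ≤ K ^ 2 * (exp 1 * (exp 1 * N)) := by
  calc B *ᵥ x ⬝ᵥ y
      = ∑ k ∈ range K, ∑ l ∈ range K, B *ᵥ levelPart K k x ⬝ᵥ levelPart K l y := by
        conv_lhs => rw [← sum_levelPart K x hK₀, ← sum_levelPart K y hK₀]
        simp_rw [mulVec_sum, sum_dotProduct, dotProduct_sum]
    _ ≤ ∑ k ∈ range K, ∑ l ∈ range K, exp 1 * (exp 1 * N) := by
        gcongr with k hk l hl
        exact levelPart_mulVec_dotProduct_le hN₀ hN hK hx hy (mem_range.1 hk) (mem_range.1 hl)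
    _ = K ^ 2 * (exp 1 * (exp 1 * N)) := by
        simp only [sum_const, card_range, nsmul_eq_mul]
        ring

theorem norm_le_of_forall_inner_le {E : Type*} [NormedAddCommGroup E] [InnerProductSpace ℝ E]
    {v : E} {C : ℝ} (hC : 0 ≤ C) (h : ∀ y : E, ‖y‖ = 1 → inner ℝ y v ≤ C) : ‖v‖ ≤ C := by
  rcases eq_or_ne v 0 with rfl | hv
  · simpa using hC
  calc ‖v‖ = inner ℝ (‖v‖⁻¹ • v) v := by
        rw [real_inner_smul_left, real_inner_self_eq_norm_sq]
        field_simp [norm_ne_zero_iff.2 hv]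
    _ ≤ C := h _ (norm_smul_inv_norm hv)

theorem sum_sq_eq_one_of_norm_eq_one {x : EuclideanSpace ℝ (Fin p)} (hx : ‖x‖ = 1) :
    ∑ i, x i ^ 2 = 1 := by
  rw [← EuclideanSpace.real_norm_sq_eq, hx, one_pow]

theorem opNorm_le_of_forall_reg (hN₀ : 0 ≤ N)
    (hN : ∀ r ∈ Icc 1 p, ∀ s ∈ Icc 1 p, ∀ x ∈ Reg p r, ∀ y ∈ Reg p s, B *ᵥ x ⬝ᵥ y ≤ N) :
    opNorm B ≤ exp 1 ^ 2 * ⌈log (2 * p)⌉₊ ^ 2 * N := by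
  set K := ⌈log (2 * p)⌉₊
  refine ContinuousLinearMap.opNorm_le_of_unit_norm (by positivity) fun x hx => ?_
  have hp : (1 : ℝ) ≤ p := by
    have : p ≠ 0 := by rintro rfl; simp [Subsingleton.elim x 0] at hx
    exact_mod_cast Nat.one_le_iff_ne_zero.2 this
  have hK₀ : 0 < K := Nat.ceil_pos.2 (log_pos (by linarith))
  have hK : √(p : ℝ) ≤ exp K := calc
    √(p : ℝ) ≤ 2 * p := (sqrt_le_left (by positivity)).2 (by nlinarith)
    _ = exp (log (2 * p)) := (exp_log (by positivity)).symm
    _ ≤ exp K := exp_le_exp.2 (Nat.le_ceil _)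
  refine norm_le_of_forall_inner_le (by positivity) fun y hy => ?_
  rw [inner_toEuclideanCLM, dotProduct_comm]
  calc _ ≤ K ^ 2 * (exp 1 * (exp 1 * N)) := mulVec_dotProduct_le_of_forall_reg hN₀ hN hK₀ hK
        (sum_sq_eq_one_of_norm_eq_one hx).le (sum_sq_eq_one_of_norm_eq_one hy).le
    _ = _ := by ring

theorem opNorm_le_max_regSup (B : Matrix (Fin p) (Fin p) ℝ) :
    opNorm B ≤ 12 * ⌈log (2 * p)⌉₊ ^ 2 * max (regSup B) (regSup Bᵀ) := by
  have hM₀ : 0 ≤ max (regSup B) (regSup Bᵀ) := le_max_of_le_left (regSup_nonneg B)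
  calc opNorm B ≤ exp 1 ^ 2 * ⌈log (2 * p)⌉₊ ^ 2 * max (regSup B) (regSup Bᵀ) :=
        opNorm_le_of_forall_reg hM₀ fun r hr s hs x hx y hy =>
          mulVec_dotProduct_le_max_regSup B hr hs hx hy
    _ ≤ 12 * ⌈log (2 * p)⌉₊ ^ 2 * max (regSup B) (regSup Bᵀ) := by
        gcongr
        nlinarith [exp_one_lt_d9, exp_pos 1]

end Deterministic

instance matrixBorelSpace {p : ℕ} : BorelSpace (Matrix (Fin p) (Fin p) ℝ) :=
  inferInstanceAs (BorelSpace (Fin p → Fin p → ℝ))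

theorem measurable_regSup {p : ℕ} : Measurable (regSup : Matrix (Fin p) (Fin p) ℝ → ℝ) := by
  simp_rw [funext regSup_eq_iSup]
  exact Measurable.iSup fun q => Continuous.measurable (by fun_prop)

theorem measure_preimage_union_le_two_mul {α β : Type*} [MeasurableSpace α] [MeasurableSpace β]
    {μ : Measure α} {X Y : α → β} (hX : AEMeasurable X μ) (hY : AEMeasurable Y μ)
    (hXY : μ.map X = μ.map Y) {S : Set β} (hS : MeasurableSet S) :
    μ (X ⁻¹' S ∪ Y ⁻¹' S) ≤ 2 * μ (X ⁻¹' S) :=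
  calc μ (X ⁻¹' S ∪ Y ⁻¹' S) ≤ μ (X ⁻¹' S) + μ (Y ⁻¹' S) := measure_union_le _ _
    _ = 2 * μ (X ⁻¹' S) := by
        rw [← Measure.map_apply_of_aemeasurable hY hS, ← hXY,
          Measure.map_apply_of_aemeasurable hX hS, two_mul]

theorem opNorm_tail_of_symmetric_distribution_general
    (p : ℕ)
    (Ω : Type) [MeasureSpace Ω]
    (A : Ω → Matrix (Fin p) (Fin p) ℝ) (hAm : Measurable A)
    (hsymm : Measure.map A ℙ = Measure.map (fun ω => (A ω)ᵀ) ℙ)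
    (t : ℝ) :
    ℙ {ω | opNorm (A ω) ≥ t}
      ≤ 2 * ℙ {ω | 12 * (⌈Real.log (2 * p)⌉₊ : ℝ) ^ 2 *
          sSup {v : ℝ | ∃ r ∈ Finset.Icc 1 p, ∃ s ∈ Finset.Icc 1 p, r ≤ s ∧
            ∃ x ∈ Reg p r, ∃ y ∈ Reg p s, v = (A ω).mulVec x ⬝ᵥ y} ≥ t} := by
  set S := {B : Matrix (Fin p) (Fin p) ℝ | 12 * (⌈log (2 * p)⌉₊ : ℝ) ^ 2 * regSup B ≥ t}
  have hS : MeasurableSet S := measurableSet_le measurable_const (measurable_regSup.const_mul _)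
  have hsub : {ω | opNorm (A ω) ≥ t} ⊆ A ⁻¹' S ∪ (fun ω => (A ω)ᵀ) ⁻¹' S := by
    intro ω (hω : t ≤ opNorm (A ω))
    have := hω.trans (opNorm_le_max_regSup (A ω))
    rwa [mul_max_of_nonneg _ _ (by positivity), le_max_iff] at this
  calc ℙ {ω | opNorm (A ω) ≥ t} ≤ ℙ (A ⁻¹' S ∪ (fun ω => (A ω)ᵀ) ⁻¹' S) := measure_mono hsub
    _ ≤ 2 * ℙ (A ⁻¹' S) := measure_preimage_union_le_two_mul hAm.aemeasurable
        (continuous_id.matrix_transpose.measurable.comp hAm).aemeasurable hsymm hS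

/-- **Computing the operator norm: symmetrically distributed matrices.** If `A` and `Aᵀ` are
identically distributed, then for every `t ≥ 0`,
`P{‖A‖ ≥ t} ≤ 2 P{12⌈ln(2p)⌉² max_{r ≤ s} max_{x ∈ Reg_p(r), y ∈ Reg_p(s)} ⟨Ax,y⟩ ≥ t}`. -/
theorem opNorm_tail_of_symmetric_distribution
    (p : ℕ) (hp : 0 < p)
    (Ω : Type) [MeasureSpace Ω] (hP : IsProbabilityMeasure (ℙ : Measure Ω))
    (A : Ω → Matrix (Fin p) (Fin p) ℝ) (hAm : Measurable A)
    (hsymm : Measure.map A ℙ = Measure.map (fun ω => (A ω)ᵀ) ℙ)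
    (t : ℝ) (ht : 0 ≤ t) :
    ℙ {ω | opNorm (A ω) ≥ t}
      ≤ 2 * ℙ {ω | 12 * (⌈Real.log (2 * p)⌉₊ : ℝ) ^ 2 *
          sSup {v : ℝ | ∃ r ∈ Finset.Icc 1 p, ∃ s ∈ Finset.Icc 1 p, r ≤ s ∧
            ∃ x ∈ Reg p r, ∃ y ∈ Reg p s, v = (A ω).mulVec x ⬝ᵥ y} ≥ t} :=
  opNorm_tail_of_symmetric_distribution_general p Ω A hAm hsymm t
end

section
/- Let p be a positive integer, set k_0 = ⌈ln(2p)⌉, and let 𝒩 be the set of all vectors x ∈ S^{p−1} such that each coordinate x_i is either 0 or satisfies |x_i| = 2^{−k} for some k ∈ {0, 1, ..., k_0}. Then every x ∈ 𝒩 can be represented as x = λ_1 x^{(1)} + ... + λ_{k_0+1} x^{(k_0+1)} where each λ_k ∈ [0, 1] and each x^{(k)} is a regular vector in Reg_p (grouping the coordinates of x by their common absolute value). -/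
open MeasureTheory ProbabilityTheory Matrix

/-- The Euclidean norm on ℝ^p. -/
noncomputable def norm2 {p : ℕ} (x : Fin p → ℝ) : ℝ := Real.sqrt (∑ i, (x i) ^ 2)

/-- The unit Euclidean sphere `S^{p-1}` in ℝ^p. -/
def unitSphere (p : ℕ) : Set (Fin p → ℝ) := {x | norm2 x = 1}

/-- The discretized net: unit vectors each of whose coordinates is `0` or of absolute value
`2^{-k}` for some `k ∈ {0, 1, …, k₀}`, where `k₀ = ⌈ln(2p)⌉`. -/
def dyadicNet (p : ℕ) : Set (Fin p → ℝ) :=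
  {x ∈ unitSphere p | ∀ i, x i = 0 ∨
    ∃ k : ℕ, k ≤ ⌈Real.log (2 * p)⌉₊ ∧ |x i| = 2 ^ (-(k : ℤ))}

/-! Group the coordinates of `x` by level: on `Sₖ = {i | |xᵢ| = 2⁻ᵏ}` the restriction of `x`
has norm `λₖ = 2⁻ᵏ √|Sₖ| ≤ ‖x‖ = 1`, and dividing it by `λₖ` gives a regular vector of
sparsity `|Sₖ|`. An empty level gets `λₖ = 0` together with an arbitrary regular vector,
say a standard basis vector. -/

open Finset

theorem sum_sq_eq_one_of_mem_unitSphere {p : ℕ} {x : Fin p → ℝ} (hx : x ∈ unitSphere p) :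
    ∑ i, x i ^ 2 = 1 :=
  Real.sqrt_eq_one.mp hx

theorem mem_RegAll_of_mem_Reg {p s : ℕ} {x : Fin p → ℝ} (hs : 1 ≤ s) (hsp : s ≤ p)
    (hx : x ∈ Reg p s) : x ∈ RegAll p :=
  Set.mem_biUnion (Finset.mem_Icc.mpr ⟨hs, hsp⟩) hx

theorem single_one_mem_Reg {p : ℕ} (j : Fin p) : Pi.single j (1 : ℝ) ∈ Reg p 1 := by
  refine ⟨by simp [Pi.single_apply], fun i => ?_⟩
  by_cases h : i = j <;> simp [h]

theorem smul_indicator_mem_Reg {p : ℕ} {x : Fin p → ℝ} {S : Finset (Fin p)} {c : ℝ}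
    (hS : S.Nonempty) (hc : 0 < c) (hxS : ∀ i ∈ S, |x i| = c) :
    (c * √(#S : ℝ))⁻¹ • (S : Set (Fin p)).indicator x ∈ Reg p #S := by
  have hn : (0 : ℝ) < #S := by exact_mod_cast hS.card_pos
  have hsq : ∀ i, ((c * √(#S : ℝ))⁻¹ • (S : Set (Fin p)).indicator x) i ^ 2
      = (S : Set (Fin p)).indicator (fun _ => 1 / (#S : ℝ)) i := by
    intro i
    by_cases hi : i ∈ S
    · simp only [Pi.smul_apply, smul_eq_mul, Set.indicator_of_mem (Finset.mem_coe.mpr hi)]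
      rw [mul_pow, ← sq_abs (x i), hxS i hi, inv_pow, mul_pow, Real.sq_sqrt hn.le]
      field_simp
    · simp [Set.indicator_of_notMem (Finset.mem_coe.not.mpr hi)]
  refine ⟨?_, fun i => ?_⟩
  · simp only [hsq, Finset.sum_indicator_subset _ (Finset.subset_univ S), Finset.sum_const,
      nsmul_eq_mul]
    field_simp
  · rw [hsq]
    by_cases hi : i ∈ S <;> simp [hi]

theorem exists_smul_mem_RegAll_eq_indicator {p : ℕ} (hp : 0 < p) {x : Fin p → ℝ}
    (hx : ∑ i, x i ^ 2 ≤ 1) {c : ℝ} (hc : 0 < c) :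
    ∃ lam ∈ Set.Icc (0 : ℝ) 1, ∃ v ∈ RegAll p, lam • v = {i | |x i| = c}.indicator x := by
  classical
  set S : Finset (Fin p) := {i | |x i| = c}
  have hS : (S : Set (Fin p)) = {i | |x i| = c} := by simp [S]
  rw [← hS]
  rcases S.eq_empty_or_nonempty with hempty | hne
  · refine ⟨0, ⟨le_rfl, zero_le_one⟩, Pi.single ⟨0, hp⟩ 1,
      mem_RegAll_of_mem_Reg le_rfl hp (single_one_mem_Reg _), ?_⟩
    rw [hempty, Finset.coe_empty, Set.indicator_empty', zero_smul]
  have hxS : ∀ i ∈ S, |x i| = c := fun i hi => (Finset.mem_filter.mp hi).2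
  have hlam : 0 < c * √(#S : ℝ) := mul_pos hc (Real.sqrt_pos.mpr (by exact_mod_cast hne.card_pos))
  have hlam_sq : (c * √(#S : ℝ)) ^ 2 = ∑ i ∈ S, x i ^ 2 := by
    rw [mul_pow, Real.sq_sqrt (Nat.cast_nonneg _), Finset.sum_congr rfl
      (fun i hi => by rw [← sq_abs, hxS i hi]), Finset.sum_const, nsmul_eq_mul, mul_comm]
  have hlam_le : c * √(#S : ℝ) ≤ 1 := by
    refine (pow_le_one_iff_of_nonneg hlam.le two_ne_zero).mp ?_
    rw [hlam_sq]
    exact (Finset.sum_le_sum_of_subset_of_nonneg (Finset.subset_univ S)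
      (fun i _ _ => sq_nonneg (x i))).trans hx
  refine ⟨c * √(#S : ℝ), ⟨hlam.le, hlam_le⟩, _,
    mem_RegAll_of_mem_Reg hne.card_pos (Finset.card_le_univ S |>.trans_eq (Fintype.card_fin p))
      (smul_indicator_mem_Reg hne hc hxS), ?_⟩
  rw [smul_smul, mul_inv_cancel₀ hlam.ne', one_smul]

theorem sum_indicator_abs_eq_self {ι κ : Type*} [Fintype κ] {x : ι → ℝ} {c : κ → ℝ}
    (hc : Function.Injective c) (hx : ∀ i, x i = 0 ∨ ∃ k, |x i| = c k) :
    ∑ k, {i | |x i| = c k}.indicator x = x := by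
  classical
  funext i
  rw [Finset.sum_apply]
  rcases hx i with h0 | ⟨k, hk⟩
  · simp [Set.indicator_apply, h0]
  · simp only [Set.indicator_apply, Set.mem_ofPred_eq, hk, hc.eq_iff, Finset.sum_ite_eq,
      Finset.mem_univ, if_true]

/-- **Decomposition of net vectors into regular vectors:** every vector of the dyadic net is a
combination `x = ∑_{k=1}^{k₀+1} λₖ x⁽ᵏ⁾` with `λₖ ∈ [0,1]` and `x⁽ᵏ⁾ ∈ Reg_p`. -/
theorem dyadicNet_decomposition (p : ℕ) (hp : 0 < p) :
    ∀ x ∈ dyadicNet p,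
      ∃ (lam : Fin (⌈Real.log (2 * p)⌉₊ + 1) → ℝ)
        (v : Fin (⌈Real.log (2 * p)⌉₊ + 1) → (Fin p → ℝ)),
        (∀ k, lam k ∈ Set.Icc (0 : ℝ) 1) ∧ (∀ k, v k ∈ RegAll p) ∧
        x = ∑ k, lam k • v k := by
  rintro x ⟨hx, hlevels⟩
  set N := ⌈Real.log (2 * p)⌉₊
  choose lam hlam v hv hlamv using fun k : Fin (N + 1) =>
    exists_smul_mem_RegAll_eq_indicator hp (sum_sq_eq_one_of_mem_unitSphere hx).le
      (c := 2 ^ (-(k : ℤ))) (by positivity)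
  have hinj : Function.Injective fun k : Fin (N + 1) => (2 : ℝ) ^ (-(k : ℤ)) :=
    fun j k h => Fin.ext (by simpa using zpow_right_injective₀ two_pos one_lt_two.ne' h)
  have hlevels' : ∀ i, x i = 0 ∨ ∃ k : Fin (N + 1), |x i| = 2 ^ (-(k : ℤ)) := fun i =>
    (hlevels i).imp_right fun ⟨k, hk, hxk⟩ => ⟨⟨k, Nat.lt_succ_of_le hk⟩, hxk⟩
  refine ⟨lam, v, hlam, hv, ?_⟩
  simp_rw [hlamv]
  exact (sum_indicator_abs_eq_self hinj hlevels').symm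
end
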